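/- Uniform boundedness of the scaled interpolation (Lemma 'bound x̂'). Assume there is a constant C_H ≥ 0 such that (i) sup_{c≥1} sup_n sup_{0 ≤ t₁ ≤ t₂ ≤ T_{n+1}−T_n} ‖∑_{i=m(T_n+t₁)}^{m(T_n+t₂)−1} α(i)·H_c(0, Y_{i+1})‖ ≤ C_H, and (ii) sup_n sup_{0 ≤ t₁ ≤ t₂ ≤ T_{n+1}−T_n} ∑_{i=m(T_n+t₁)}^{m(T_n+t₂)−1} α(i)·L(Y_{i+1}) ≤ C_H. Then sup_n sup_{t ∈ [0, T)} ‖x̂(T_n + t)‖ ≤ (1 + C_H)·e^{C_H}. -/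

import Mathlib

/-!
On the window `[Tₙ, Tₙ + T)` write `H (xᵢ) = H 0 + (H (xᵢ) - H 0)`. Since `H_c(0, ·) = H(0, ·)/c`,
hypothesis (i) with `c = rₙ` bounds the partial sums of `αᵢ H(0, Yᵢ₊₁)` by `rₙ C_H`, while the
Lipschitz bound controls the rest by `∑ αᵢ L(Yᵢ₊₁) ‖xᵢ‖`. Hence
`‖x_k‖ ≤ rₙ (1 + C_H) + ∑_{m(Tₙ) ≤ i < k} αᵢ L(Yᵢ₊₁) ‖xᵢ‖`, and the discrete Gronwall inequality together
with hypothesis (ii) gives `‖x_k‖ ≤ rₙ (1 + C_H) e^{C_H}`.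
-/

open Filter Finset Real

theorem discrete_gronwall_sum_form {u a : ℕ → ℝ} {B : ℝ} {N K : ℕ} (hB : 0 ≤ B)
    (ha : ∀ i, 0 ≤ a i) (hNK : N ≤ K)
    (hu : ∀ k, N ≤ k → k ≤ K → u k ≤ B + ∑ i ∈ Ico N k, a i * u i) :
    u K ≤ B * exp (∑ i ∈ Ico N K, a i) := by
  suffices h : ∀ k, N ≤ k → k ≤ K → B + ∑ i ∈ Ico N k, a i * u i ≤ B * exp (∑ i ∈ Ico N k, a i) from
    (hu K hNK le_rfl).trans (h K hNK le_rfl)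
  intro k hNk
  induction k, hNk using Nat.le_induction with
  | base => simp
  | succ k hNk ih =>
    intro hkK
    have hW := ih (by omega)
    have huk := (hu k hNk (by omega)).trans hW
    rw [sum_Ico_succ_top hNk, sum_Ico_succ_top hNk, exp_add]
    calc B + (∑ i ∈ Ico N k, a i * u i + a k * u k)
        ≤ B * exp (∑ i ∈ Ico N k, a i) * (1 + a k) := by
          linarith [mul_le_mul_of_nonneg_left huk (ha k)]
      _ ≤ B * (exp (∑ i ∈ Ico N k, a i) * exp (a k)) := by
          rw [← mul_assoc]
          gcongr
          linarith [add_one_le_exp (a k)]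

section Clock

variable {t : ℕ → ℝ} {m : ℝ → ℕ}

theorem strictMono_sum_range_of_pos {α : ℕ → ℝ} (hα : ∀ n, 0 < α n) :
    StrictMono fun n => ∑ i ∈ range n, α i :=
  strictMono_nat_of_lt_succ fun n => by simpa [sum_range_succ] using hα n

theorem lt_clock_index_succ (hm_max : ∀ s : ℝ, 0 ≤ s → ∀ i : ℕ, t i ≤ s → i ≤ m s)
    {s : ℝ} (hs : 0 ≤ s) : s < t (m s + 1) := by
  by_contra! h
  exact (m s).lt_succ_self.not_ge (hm_max s hs _ h)

variable (ht : StrictMono t) (ht0 : 0 ≤ t 0)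
  (hm_le : ∀ s : ℝ, 0 ≤ s → t (m s) ≤ s)
  (hm_max : ∀ s : ℝ, 0 ≤ s → ∀ i : ℕ, t i ≤ s → i ≤ m s)
include ht ht0

theorem clock_nonneg (k : ℕ) : 0 ≤ t k :=
  ht0.trans (ht.monotone k.zero_le)

include hm_le hm_max

theorem index_clock (k : ℕ) : m (t k) = k :=
  le_antisymm (ht.le_iff_le.mp (hm_le _ (clock_nonneg ht ht0 k)))
    (hm_max _ (clock_nonneg ht ht0 k) k le_rfl)

theorem exists_time_of_mem_window (N : ℕ) {s : ℝ} (hs : 0 ≤ s) {k : ℕ} (hNk : N ≤ k)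
    (hkK : k ≤ m (t N + s)) : ∃ τ, 0 ≤ τ ∧ τ ≤ s ∧ m (t N + τ) = k := by
  have hk : t k ≤ t N + s :=
    (ht.monotone hkK).trans (hm_le _ (add_nonneg (clock_nonneg ht ht0 N) hs))
  refine ⟨t k - t N, sub_nonneg.mpr (ht.monotone hNk), by linarith, ?_⟩
  rw [add_sub_cancel, index_clock ht ht0 hm_le hm_max]

end Clock

section Iterates

variable {E 𝓨 : Type*} [NormedAddCommGroup E] [NormedSpace ℝ E]
  {α : ℕ → ℝ} {Y : ℕ → 𝓨} {H : E → 𝓨 → E} {x : ℕ → E} {L : 𝓨 → ℝ}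

theorem norm_sum_smul_le_of_inv_smul {ι : Type*} (S : Finset ι) (a : ι → ℝ) (v : ι → E)
    {c C : ℝ} (hc : 0 < c) (h : ‖∑ i ∈ S, a i • (c⁻¹ • v i)‖ ≤ C) :
    ‖∑ i ∈ S, a i • v i‖ ≤ c * C := by
  simpa only [smul_comm (a _) c⁻¹, ← smul_sum, norm_smul, norm_inv, Real.norm_of_nonneg hc.le,
    inv_mul_le_iff₀ hc] using h

theorem norm_iterate_le_add_sum (hα : ∀ n, 0 ≤ α n)
    (hx : ∀ n, x (n + 1) = x n + α n • H (x n) (Y (n + 1)))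
    (hH_lip : ∀ x₁ x₂ : E, ∀ y : 𝓨, ‖H x₁ y - H x₂ y‖ ≤ L y * ‖x₁ - x₂‖)
    {N k : ℕ} (hNk : N ≤ k) :
    ‖x k‖ ≤ ‖x N‖ + ‖∑ i ∈ Ico N k, α i • H 0 (Y (i + 1))‖
      + ∑ i ∈ Ico N k, α i * L (Y (i + 1)) * ‖x i‖ := by
  have hsplit : x k - x N = ∑ i ∈ Ico N k, α i • H 0 (Y (i + 1))
      + ∑ i ∈ Ico N k, α i • (H (x i) (Y (i + 1)) - H 0 (Y (i + 1))) := by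
    rw [← sum_Ico_sub x hNk, ← sum_add_distrib]
    refine sum_congr rfl fun i _ => ?_
    rw [hx i, ← smul_add]
    abel
  have hdrift : ‖∑ i ∈ Ico N k, α i • (H (x i) (Y (i + 1)) - H 0 (Y (i + 1)))‖
      ≤ ∑ i ∈ Ico N k, α i * L (Y (i + 1)) * ‖x i‖ := by
    refine (norm_sum_le _ _).trans (sum_le_sum fun i _ => ?_)
    rw [norm_smul, Real.norm_of_nonneg (hα i), mul_assoc]
    simpa using mul_le_mul_of_nonneg_left (hH_lip (x i) 0 (Y (i + 1))) (hα i)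
  calc ‖x k‖ ≤ ‖x N‖ + ‖x k - x N‖ := norm_le_norm_add_norm_sub' _ _
    _ ≤ _ := by
      rw [hsplit, add_assoc]
      gcongr
      exact (norm_add_le _ _).trans (by gcongr)

theorem norm_iterate_le_mul_exp (hα : ∀ n, 0 ≤ α n) (hL_nonneg : ∀ y, 0 ≤ L y)
    (hx : ∀ n, x (n + 1) = x n + α n • H (x n) (Y (n + 1)))
    (hH_lip : ∀ x₁ x₂ : E, ∀ y : 𝓨, ‖H x₁ y - H x₂ y‖ ≤ L y * ‖x₁ - x₂‖)
    {N K : ℕ} (hNK : N ≤ K) {B : ℝ}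
    (hB : ∀ k, N ≤ k → k ≤ K → ‖x N‖ + ‖∑ i ∈ Ico N k, α i • H 0 (Y (i + 1))‖ ≤ B) :
    ‖x K‖ ≤ B * exp (∑ i ∈ Ico N K, α i * L (Y (i + 1))) := by
  have hB0 : 0 ≤ B := (add_nonneg (norm_nonneg _) (norm_nonneg _)).trans (hB N le_rfl hNK)
  refine discrete_gronwall_sum_form hB0 (fun i => mul_nonneg (hα i) (hL_nonneg _)) hNK
    fun k hNk hkK => (norm_iterate_le_add_sum hα hx hH_lip hNk).trans ?_
  gcongr
  exact hB k hNk hkK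

end Iterates

theorem scaled_interpolation_bounded_general
    {E : Type*} [NormedAddCommGroup E] [NormedSpace ℝ E]
    {𝓨 : Type*}
    (α : ℕ → ℝ)
    (hα_pos : ∀ n, 0 < α n)
    (t : ℕ → ℝ) (ht : ∀ n, t n = ∑ i ∈ Finset.range n, α i)
    (m : ℝ → ℕ)
    (hm_le : ∀ s : ℝ, 0 ≤ s → t (m s) ≤ s)
    (hm_max : ∀ s : ℝ, 0 ≤ s → ∀ i : ℕ, t i ≤ s → i ≤ m s)
    (T : ℝ)
    (Tseq : ℕ → ℝ) (hTseq0 : Tseq 0 = 0)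
    (hTseq : ∀ n, Tseq (n + 1) = t (m (Tseq n + T) + 1))
    (Y : ℕ → 𝓨) (H : E → 𝓨 → E)
    (x : ℕ → E)
    (hx : ∀ n, x (n + 1) = x n + α n • H (x n) (Y (n + 1)))
    (L : 𝓨 → ℝ) (hL_nonneg : ∀ y, 0 ≤ L y)
    (hH_lip : ∀ x₁ x₂ : E, ∀ y : 𝓨, ‖H x₁ y - H x₂ y‖ ≤ L y * ‖x₁ - x₂‖)
    (r : ℕ → ℝ) (hr : ∀ n, r n = max 1 ‖x (m (Tseq n))‖)
    (CH : ℝ) (hCH : 0 ≤ CH)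
    (hH0_bound : ∀ c : ℝ, 1 ≤ c → ∀ n : ℕ, ∀ t₁ t₂ : ℝ,
      0 ≤ t₁ → t₁ ≤ t₂ → t₂ ≤ Tseq (n + 1) - Tseq n →
        ‖∑ i ∈ Finset.Ico (m (Tseq n + t₁)) (m (Tseq n + t₂)),
            α i • (c⁻¹ • H 0 (Y (i + 1)))‖ ≤ CH)
    (hL_bound : ∀ n : ℕ, ∀ t₁ t₂ : ℝ, 0 ≤ t₁ → t₁ ≤ t₂ → t₂ ≤ Tseq (n + 1) - Tseq n →
      ∑ i ∈ Finset.Ico (m (Tseq n + t₁)) (m (Tseq n + t₂)), α i * L (Y (i + 1)) ≤ CH) :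
    ∀ n : ℕ, ∀ s : ℝ, 0 ≤ s → s < T →
      ‖(r n)⁻¹ • x (m (Tseq n + s))‖ ≤ (1 + CH) * Real.exp CH := by
  intro n s hs hsT
  have ht_mono : StrictMono t := by
    simpa only [← funext ht] using strictMono_sum_range_of_pos hα_pos
  have ht0 : t 0 = 0 := by simp [ht]
  obtain ⟨N, hN⟩ : ∃ N, Tseq n = t N :=
    n.casesOn ⟨0, hTseq0.trans ht0.symm⟩ fun n => ⟨_, hTseq n⟩
  have hmN : m (Tseq n) = N := hN ▸ index_clock ht_mono ht0.ge hm_le hm_max N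
  have hTn := clock_nonneg ht_mono ht0.ge N
  have hgap : Tseq n + T < Tseq (n + 1) :=
    hTseq n ▸ lt_clock_index_succ hm_max (by linarith)
  have hr1 : 1 ≤ r n := hr n ▸ le_max_left _ _
  have hr0 : 0 < r n := one_pos.trans_le hr1
  have hNK : N ≤ m (Tseq n + s) := hm_max _ (by linarith) N (by linarith)
  have hnoise : ∀ k, N ≤ k → k ≤ m (Tseq n + s) →
      ‖x N‖ + ‖∑ i ∈ Ico N k, α i • H 0 (Y (i + 1))‖ ≤ r n * (1 + CH) := by
    intro k hNk hkK
    obtain ⟨τ, hτ0, hτs, hτk⟩ :=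
      exists_time_of_mem_window ht_mono ht0.ge hm_le hm_max N hs hNk (hN ▸ hkK)
    have h := hH0_bound (r n) hr1 n 0 τ le_rfl hτ0 (by linarith)
    rw [add_zero, hmN, hN, hτk] at h
    have hxN : ‖x N‖ ≤ r n := hmN ▸ hr n ▸ le_max_right _ _
    linarith [norm_sum_smul_le_of_inv_smul _ _ _ hr0 h]
  have hdrift : ∑ i ∈ Ico N (m (Tseq n + s)), α i * L (Y (i + 1)) ≤ CH := by
    simpa only [add_zero, hmN] using hL_bound n 0 s le_rfl hs (by linarith)
  have hxK := norm_iterate_le_mul_exp (fun i => (hα_pos i).le) hL_nonneg hx hH_lip hNK hnoise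
  rw [norm_smul, norm_inv, Real.norm_of_nonneg hr0.le, inv_mul_le_iff₀ hr0]
  calc ‖x (m (Tseq n + s))‖ ≤ r n * (1 + CH) * exp CH := hxK.trans (by gcongr)
    _ = r n * ((1 + CH) * exp CH) := mul_assoc _ _ _

theorem scaled_interpolation_bounded
    {E : Type*} [NormedAddCommGroup E] [NormedSpace ℝ E] [FiniteDimensional ℝ E]
    [Nontrivial E]
    {𝓨 : Type*}
    (α : ℕ → ℝ)
    (hα_pos : ∀ n, 0 < α n)
    (hα_anti : ∀ n, α (n + 1) ≤ α n)
    (hα_div : Tendsto (fun n => ∑ i ∈ Finset.range n, α i) atTop atTop)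
    (hα_to0 : Tendsto α atTop (nhds 0))
    (t : ℕ → ℝ) (ht : ∀ n, t n = ∑ i ∈ Finset.range n, α i)
    (m : ℝ → ℕ)
    (hm_le : ∀ s : ℝ, 0 ≤ s → t (m s) ≤ s)
    (hm_max : ∀ s : ℝ, 0 ≤ s → ∀ i : ℕ, t i ≤ s → i ≤ m s)
    (hm_neg : ∀ s : ℝ, s < 0 → m s = 0)
    (T : ℝ) (hT : 0 < T)
    (Tseq : ℕ → ℝ) (hTseq0 : Tseq 0 = 0)
    (hTseq : ∀ n, Tseq (n + 1) = t (m (Tseq n + T) + 1))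
    (Y : ℕ → 𝓨) (H : E → 𝓨 → E)
    (x : ℕ → E)
    (hx : ∀ n, x (n + 1) = x n + α n • H (x n) (Y (n + 1)))
    (L : 𝓨 → ℝ) (hL_nonneg : ∀ y, 0 ≤ L y)
    (hH_lip : ∀ x₁ x₂ : E, ∀ y : 𝓨, ‖H x₁ y - H x₂ y‖ ≤ L y * ‖x₁ - x₂‖)
    (r : ℕ → ℝ) (hr : ∀ n, r n = max 1 ‖x (m (Tseq n))‖)
    (CH : ℝ) (hCH : 0 ≤ CH)
    (hH0_bound : ∀ c : ℝ, 1 ≤ c → ∀ n : ℕ, ∀ t₁ t₂ : ℝ,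
      0 ≤ t₁ → t₁ ≤ t₂ → t₂ ≤ Tseq (n + 1) - Tseq n →
        ‖∑ i ∈ Finset.Ico (m (Tseq n + t₁)) (m (Tseq n + t₂)),
            α i • (c⁻¹ • H 0 (Y (i + 1)))‖ ≤ CH)
    (hL_bound : ∀ n : ℕ, ∀ t₁ t₂ : ℝ, 0 ≤ t₁ → t₁ ≤ t₂ → t₂ ≤ Tseq (n + 1) - Tseq n →
      ∑ i ∈ Finset.Ico (m (Tseq n + t₁)) (m (Tseq n + t₂)), α i * L (Y (i + 1)) ≤ CH) :
    ∀ n : ℕ, ∀ s : ℝ, 0 ≤ s → s < T →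
      ‖(r n)⁻¹ • x (m (Tseq n + s))‖ ≤ (1 + CH) * Real.exp CH :=
  scaled_interpolation_bounded_general α hα_pos t ht m hm_le hm_max T Tseq hTseq0 hTseq Y H x hx L
    hL_nonneg hH_lip r hr CH hCH hH0_bound hL_bound
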